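/- (Row-sum property of the matrix D.) Let ε ∈ (0, Δ) and suppose α e^{Sy} e > 0 for all y ∈ [0, Δ−ε]. Define D := ∫_0^{Δ−ε} e^{Sy} s · (α e^{Sy} / (α e^{Sy} e)) dy + (∫_{Δ−ε}^∞ e^{Sy} s dy) · (α e^{S(Δ−ε)} / (α e^{S(Δ−ε)} e)). Then D e = e. -/

import Mathlib

open MeasureTheory Matrix

attribute [local instance] Matrix.normedAddCommGroup Matrix.normedSpace

/-- `e^{xS}` : the matrix exponential of `x • S`. -/
noncomputable def mexp {p : ℕ} (S : Matrix (Fin p) (Fin p) ℝ) (x : ℝ) :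
    Matrix (Fin p) (Fin p) ℝ := NormedSpace.exp (x • S)

/-- The matrix `D = ∫₀^{Δ-ε} e^{Sy} s (α e^{Sy}/(α e^{Sy} e)) dy
  + (∫_{Δ-ε}^∞ e^{Sy} s dy)(α e^{S(Δ-ε)}/(α e^{S(Δ-ε)} e))`,
where `e` is the all-ones vector and `s = -S e`. -/
noncomputable def Dmat {p : ℕ} (S : Matrix (Fin p) (Fin p) ℝ) (α : Fin p → ℝ)
    (Δ ε : ℝ) : Matrix (Fin p) (Fin p) ℝ :=
  Matrix.of fun i j =>
    (∫ y in Set.Ioc (0 : ℝ) (Δ - ε),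
        (mexp S y *ᵥ -(S *ᵥ fun _ => (1 : ℝ))) i
          * ((α ᵥ* mexp S y) j / ((α ᵥ* mexp S y) ⬝ᵥ fun _ => (1 : ℝ))))
    + (∫ y in Set.Ioi (Δ - ε), (mexp S y *ᵥ -(S *ᵥ fun _ => (1 : ℝ))) i)
        * ((α ᵥ* mexp S (Δ - ε)) j / ((α ᵥ* mexp S (Δ - ε)) ⬝ᵥ fun _ => (1 : ℝ)))

/-! The weights `α e^{Sy} / (α e^{Sy} e)` sum to one, so the `i`-th row sum of `D` collapses to
`∫₀^∞ (e^{Sy} s)ᵢ dy`. Since `e^{Sy} S` is the derivative of `e^{Sy}` and `e^{Sy} → 0`, this integral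
is `-[(e^{Sy} e)ᵢ]₀^∞ = (e^{0} e)ᵢ = 1`. -/

open Set Filter Topology

section NormalizedWeights

variable {ι : Type*} [Fintype ι]

lemma sum_div_dotProduct_one {x : ι → ℝ} (hx : (x ⬝ᵥ fun _ => (1 : ℝ)) ≠ 0) :
    ∑ j, x j / (x ⬝ᵥ fun _ => (1 : ℝ)) = 1 := by
  rw [← Finset.sum_div, div_eq_one_iff_eq hx]
  simp [dotProduct]

lemma sum_integral_Ioc_mul_div_dotProduct_one {A : ℝ → ℝ} {w : ℝ → ι → ℝ} {a b : ℝ}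
    (hA : Continuous A) (hw : Continuous w)
    (hw0 : ∀ y ∈ Icc a b, (w y ⬝ᵥ fun _ => (1 : ℝ)) ≠ 0) :
    ∑ j, ∫ y in Ioc a b, A y * (w y j / (w y ⬝ᵥ fun _ => (1 : ℝ))) = ∫ y in Ioc a b, A y := by
  have hint : ∀ j, IntegrableOn (fun y => A y * (w y j / (w y ⬝ᵥ fun _ => (1 : ℝ)))) (Ioc a b) :=
    fun j => ContinuousOn.integrableOn_Icc (hA.continuousOn.mul
      (((continuous_apply j).comp hw).continuousOn.div
        (hw.dotProduct continuous_const).continuousOn hw0)) |>.mono_set Ioc_subset_Icc_self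
  rw [← integral_finsetSum _ fun j _ => hint j]
  refine setIntegral_congr_fun measurableSet_Ioc fun y hy => ?_
  rw [← Finset.mul_sum, sum_div_dotProduct_one (hw0 y (Ioc_subset_Icc_self hy)), mul_one]

end NormalizedWeights

lemma abs_mulVec_apply_le {m n : Type*} [Fintype m] [Fintype n] (M : Matrix m n ℝ)
    (v : n → ℝ) (i : m) : |(M *ᵥ v) i| ≤ (∑ j, |v j|) * ‖M‖ :=
  calc |(M *ᵥ v) i| ≤ ∑ j, |M i j * v j| := Finset.abs_sum_le_sum_abs _ _
    _ ≤ ∑ j, |v j| * ‖M‖ := Finset.sum_le_sum fun j _ => by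
      rw [abs_mul, mul_comm]
      exact mul_le_mul_of_nonneg_left (M.norm_entry_le_entrywise_sup_norm) (abs_nonneg _)
    _ = (∑ j, |v j|) * ‖M‖ := (Finset.sum_mul ..).symm

section MatrixExponential

variable {p : ℕ} (S : Matrix (Fin p) (Fin p) ℝ)

lemma mexp_zero : mexp S 0 = 1 := by
  simp [mexp]

lemma hasDerivAt_mexp (t : ℝ) : HasDerivAt (mexp S) (mexp S t * S) t := by
  -- Derivatives only see the topology, so we may use the submultiplicative `L^∞` operator norm.
  let _ := Matrix.linftyOpNormedRing (α := ℝ) (n := Fin p)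
  let _ := Matrix.linftyOpNormedAlgebra (α := ℝ) (R := ℝ) (n := Fin p)
  have : @CompleteSpace (Matrix (Fin p) (Fin p) ℝ) (@PseudoMetricSpace.toUniformSpace _
      (@SeminormedRing.toPseudoMetricSpace _ (@NormedRing.toSeminormedRing _
        (Matrix.linftyOpNormedRing (α := ℝ) (n := Fin p))))) := FiniteDimensional.complete ℝ _
  exact hasDerivAt_exp_smul_const S t

lemma continuous_mexp : Continuous (mexp S) :=
  continuous_iff_continuousAt.2 fun t => (hasDerivAt_mexp S t).continuousAt

lemma hasDerivAt_mexp_mulVec_apply (v : Fin p → ℝ) (i : Fin p) (t : ℝ) :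
    HasDerivAt (fun y => (mexp S y *ᵥ v) i) ((mexp S t *ᵥ (S *ᵥ v)) i) t := by
  have hij : ∀ j, HasDerivAt (fun y => mexp S y i j) ((mexp S t * S) i j) t := fun j =>
    hasDerivAt_pi.1 (hasDerivAt_pi.1 (hasDerivAt_mexp S t) i) j
  rw [Matrix.mulVec_mulVec]
  simpa only [Matrix.mulVec, dotProduct] using
    HasDerivAt.fun_sum (u := Finset.univ) fun j _ => (hij j).mul_const (v j)

lemma continuous_mexp_mulVec_apply (v : Fin p → ℝ) (i : Fin p) :
    Continuous fun y => (mexp S y *ᵥ v) i :=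
  continuous_iff_continuousAt.2 fun t => (hasDerivAt_mexp_mulVec_apply S v i t).continuousAt

variable {S}

lemma integrableOn_mexp_mulVec_apply {s : Set ℝ} (hS : IntegrableOn (fun x => ‖mexp S x‖) s)
    (v : Fin p → ℝ) (i : Fin p) : IntegrableOn (fun y => (mexp S y *ᵥ v) i) s :=
  Integrable.mono' (hS.const_mul _) (continuous_mexp_mulVec_apply S v i).aestronglyMeasurable
    (Eventually.of_forall fun y => abs_mulVec_apply_le (mexp S y) v i)

lemma tendsto_mexp_mulVec_apply (hS0 : Tendsto (mexp S) atTop (𝓝 0)) (v : Fin p → ℝ)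
    (i : Fin p) : Tendsto (fun y => (mexp S y *ᵥ v) i) atTop (𝓝 0) := by
  simpa [Function.comp_def] using (((continuous_apply i).comp
    (continuous_id.matrix_mulVec continuous_const)).tendsto 0).comp hS0

lemma integral_Ioi_mexp_mulVec_mulVec_apply (hS0 : Tendsto (mexp S) atTop (𝓝 0))
    (hSint : IntegrableOn (fun x => ‖mexp S x‖) (Ici 0)) (v : Fin p → ℝ) (i : Fin p) :
    ∫ y in Ioi 0, (mexp S y *ᵥ (S *ᵥ v)) i = -v i := by
  rw [integral_Ioi_of_hasDerivAt_of_tendsto' (fun t _ => hasDerivAt_mexp_mulVec_apply S v i t)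
    (integrableOn_mexp_mulVec_apply (hSint.mono_set Ioi_subset_Ici_self) _ i)
    (tendsto_mexp_mulVec_apply hS0 v i)]
  simp [mexp_zero]

end MatrixExponential

theorem Dmat_row_sums_general
    (p : ℕ) (S : Matrix (Fin p) (Fin p) ℝ)
    (hS0 : Filter.Tendsto (fun x : ℝ => mexp S x) Filter.atTop (nhds 0))
    (hSint : IntegrableOn (fun x : ℝ => ‖mexp S x‖) (Set.Ici 0))
    (α : Fin p → ℝ) (Δ ε : ℝ) (hε : ε ∈ Set.Ioo 0 Δ)
    (hpos : ∀ y ∈ Set.Icc (0 : ℝ) (Δ - ε), 0 < (α ᵥ* mexp S y) ⬝ᵥ (fun _ => (1 : ℝ))) :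
    Dmat S α Δ ε *ᵥ (fun _ => (1 : ℝ)) = fun _ => (1 : ℝ) := by
  have hT : 0 ≤ Δ - ε := sub_nonneg.2 hε.2.le
  have hd : ∀ y ∈ Icc 0 (Δ - ε), ((α ᵥ* mexp S y) ⬝ᵥ fun _ => (1 : ℝ)) ≠ 0 :=
    fun y hy => (hpos y hy).ne'
  funext i
  set A := fun y => (mexp S y *ᵥ -(S *ᵥ fun _ => (1 : ℝ))) i with hA
  have hAint : IntegrableOn A (Ioi 0) :=
    integrableOn_mexp_mulVec_apply (hSint.mono_set Ioi_subset_Ici_self) _ i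
  calc (Dmat S α Δ ε *ᵥ fun _ => (1 : ℝ)) i = ∑ j, Dmat S α Δ ε i j := by
        simp only [Matrix.mulVec, dotProduct, mul_one]
    _ = (∫ y in Ioc 0 (Δ - ε), A y) + ∫ y in Ioi (Δ - ε), A y := by
      simp only [Dmat, Matrix.of_apply, Finset.sum_add_distrib, ← Finset.mul_sum,
        sum_integral_Ioc_mul_div_dotProduct_one (continuous_mexp_mulVec_apply S _ i)
          (continuous_const.matrix_vecMul (continuous_mexp S)) hd,
        sum_div_dotProduct_one (hd _ ⟨hT, le_rfl⟩), mul_one]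
      rfl
    _ = ∫ y in Ioi 0, A y := by
      rw [← setIntegral_union (Ioc_disjoint_Ioi le_rfl) measurableSet_Ioi
        (hAint.mono_set Ioc_subset_Ioi_self) (hAint.mono_set (Ioi_subset_Ioi hT)),
        Ioc_union_Ioi_eq_Ioi hT]
    _ = 1 := by
      simp only [hA, Matrix.mulVec_neg, Pi.neg_apply, integral_neg,
        integral_Ioi_mexp_mulVec_mulVec_apply hS0 hSint, neg_neg]

/-- row-sum property of `D`: `D e = e`. -/
theorem Dmat_row_sums
    (p : ℕ) (hp : 1 ≤ p) (S : Matrix (Fin p) (Fin p) ℝ)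
    (hS0 : Filter.Tendsto (fun x : ℝ => mexp S x) Filter.atTop (nhds 0))
    (hSint : IntegrableOn (fun x : ℝ => ‖mexp S x‖) (Set.Ici 0))
    (α : Fin p → ℝ) (Δ ε : ℝ) (hΔ : 0 < Δ) (hε : ε ∈ Set.Ioo 0 Δ)
    (hpos : ∀ y ∈ Set.Icc (0 : ℝ) (Δ - ε), 0 < (α ᵥ* mexp S y) ⬝ᵥ (fun _ => (1 : ℝ))) :
    Dmat S α Δ ε *ᵥ (fun _ => (1 : ℝ)) = fun _ => (1 : ℝ) :=
  Dmat_row_sums_general p S hS0 hSint α Δ ε hε hpos
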